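/- arXiv:2307.00506 — 5 statements merged into one kernel-verified Lean document; each statement's English description precedes it below -/
import Mathlib

section
/- Assume $m>0$. For every $r>0$ with $f(r)>0$ one has $r > 2m$, the quantity $k(r)^2 + \frac{4}{3}\Lambda = \frac{4}{r^3}(r-2m)$ is strictly positive, and the ratio identity $\dfrac{\sqrt{f(r)}\,k'(r)}{k(r)^2 + \frac{4}{3}\Lambda} = -\dfrac{1}{2} + \dfrac{1}{2\left(\frac{r}{m} - 2\right)}$ holds. -/
/-!
Writing `s = √f`, the curvature is `k = 2s/r`, so `k² = 4f/r²` and `s k' = f'/r - 2f/r²`: both are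
rational in `r` once `f` is, and the square root disappears. For Schwarzschild–deSitter the
cosmological terms cancel, leaving `k² + 4Λ/3 = 4(r - 2m)/r³` and `s k' = 2(3m - r)/r³`, whose
quotient is the claimed ratio.
-/

open Real

section MeanCurvature

variable {f : ℝ → ℝ} {f' r : ℝ}

theorem sq_two_div_mul_sqrt (hf : 0 ≤ f r) : (2 / r * √(f r)) ^ 2 = 4 * f r / r ^ 2 := by
  rw [mul_pow, sq_sqrt hf]
  ring

theorem hasDerivAt_two_div_mul_sqrt (hf : HasDerivAt f f' r) (hfr : 0 < f r) (hr : r ≠ 0) :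
    HasDerivAt (fun x => 2 / x * √(f x)) (-(2 / r ^ 2) * √(f r) + 2 / r * (f' / (2 * √(f r))))
      r := by
  have hinv : HasDerivAt (fun x => 2 / x) (-(2 / r ^ 2)) r := by
    simpa [div_eq_mul_inv] using (hasDerivAt_inv hr).const_mul (2 : ℝ)
  exact hinv.mul (hf.sqrt hfr.ne')

theorem sqrt_mul_deriv_two_div_mul_sqrt (hf : HasDerivAt f f' r) (hfr : 0 < f r) (hr : r ≠ 0) :
    √(f r) * deriv (fun x => 2 / x * √(f x)) r = f' / r - 2 * f r / r ^ 2 := by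
  have hs : √(f r) ≠ 0 := (sqrt_pos.mpr hfr).ne'
  rw [(hasDerivAt_two_div_mul_sqrt hf hfr hr).deriv]
  field_simp
  rw [sq_sqrt hfr.le]
  ring

end MeanCurvature

section SchwarzschildDeSitter

noncomputable def sdsMetricFun (m Λ : ℝ) : ℝ → ℝ := fun r => 1 - 2 * m / r - Λ / 3 * r ^ 2

variable {m Λ r : ℝ}

theorem hasDerivAt_sdsMetricFun (hr : r ≠ 0) :
    HasDerivAt (sdsMetricFun m Λ) (2 * m / r ^ 2 - 2 * Λ * r / 3) r := by
  have hinv : HasDerivAt (fun x => 2 * m / x) (-(2 * m / r ^ 2)) r := by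
    simpa [div_eq_mul_inv] using (hasDerivAt_inv hr).const_mul (2 * m)
  have hsq : HasDerivAt (fun x => Λ / 3 * x ^ 2) (Λ / 3 * (2 * r)) r := by
    simpa using (hasDerivAt_pow 2 r).const_mul (Λ / 3)
  exact (((hasDerivAt_const r (1 : ℝ)).sub hinv).sub hsq).congr_deriv (by ring)

theorem two_mul_lt_of_sdsMetricFun_pos (hΛ : 0 ≤ Λ) (hr : 0 < r) (hf : 0 < sdsMetricFun m Λ r) :
    2 * m < r := by
  have hdiv : 2 * m / r < 1 := by
    have : 0 ≤ Λ / 3 * r ^ 2 := by positivity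
    unfold sdsMetricFun at hf
    linarith
  rwa [div_lt_one hr] at hdiv

theorem four_mul_sdsMetricFun_div_sq_add (hr : r ≠ 0) :
    4 * sdsMetricFun m Λ r / r ^ 2 + 4 / 3 * Λ = 4 / r ^ 3 * (r - 2 * m) := by
  unfold sdsMetricFun
  field_simp
  ring

theorem deriv_sdsMetricFun_div_sub (hr : r ≠ 0) :
    (2 * m / r ^ 2 - 2 * Λ * r / 3) / r - 2 * sdsMetricFun m Λ r / r ^ 2 = 2 * (3 * m - r) / r ^ 3 := by
  unfold sdsMetricFun
  field_simp
  ring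

theorem sds_ratio_eq (hm : 0 < m) (hr : 2 * m < r) :
    2 * (3 * m - r) / r ^ 3 / (4 / r ^ 3 * (r - 2 * m)) = -(1 / 2) + 1 / (2 * (r / m - 2)) := by
  have hr0 : r ≠ 0 := by linarith
  have hrm : r - 2 * m ≠ 0 := by linarith
  rw [show r / m - 2 = (r - 2 * m) / m by field_simp]
  field_simp
  ring

end SchwarzschildDeSitter

/-- Schwarzschild–deSitter static slice with `m > 0`: for every `r > 0` with
`f r > 0` one has `r > 2m`, the quantity `k(r)² + (4/3)Λ = (4/r³)(r - 2m)` is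
strictly positive, and `√(f r) * k' r / (k(r)² + (4/3)Λ) = -1/2 + 1/(2(r/m - 2))`. -/
theorem static_slice_ratio_identity (m Λ : ℝ) (hm : 0 < m) (hΛ : 0 < Λ)
    (f k : ℝ → ℝ)
    (hf : ∀ r, f r = 1 - 2*m/r - Λ/3 * r^2)
    (hk : ∀ r, k r = (2/r) * Real.sqrt (f r)) :
    ∀ r : ℝ, 0 < r → 0 < f r →
      2*m < r ∧
      (k r)^2 + (4/3)*Λ = (4/r^3) * (r - 2*m) ∧
      0 < (k r)^2 + (4/3)*Λ ∧
      Real.sqrt (f r) * deriv k r / ((k r)^2 + (4/3)*Λ)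
        = -(1/2) + 1/(2*(r/m - 2)) := by
  intro r hr hfr
  obtain rfl : f = sdsMetricFun m Λ := funext hf
  obtain rfl : k = fun x => 2 / x * √(sdsMetricFun m Λ x) := funext hk
  have h2m := two_mul_lt_of_sdsMetricFun_pos hΛ.le hr hfr
  have hsum : (2 / r * √(sdsMetricFun m Λ r)) ^ 2 + 4 / 3 * Λ = 4 / r ^ 3 * (r - 2 * m) := by
    rw [sq_two_div_mul_sqrt hfr.le, four_mul_sdsMetricFun_div_sq_add hr.ne']
  have hpos : 0 < 4 / r ^ 3 * (r - 2 * m) := by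
    have : 0 < r - 2 * m := by linarith
    positivity
  refine ⟨h2m, hsum, hsum ▸ hpos, ?_⟩
  rw [sqrt_mul_deriv_two_div_mul_sqrt (hasDerivAt_sdsMetricFun hr.ne') hfr hr.ne', hsum,
    deriv_sdsMetricFun_div_sub hr.ne', sds_ratio_eq hm h2m]
end

section
/- Assume $m>0$ and $9\Lambda m^2 < 1$. Then $f(3m) > 0$, and the maximum of $k$ over the region where $f>0$ is attained exactly at $r = 3m$ (the locus of the unstable circular photon orbit): for every $r>0$ with $f(r)>0$ and $r \neq 3m$, one has $k(r) < k(3m)$. -/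
/-- Schwarzschild–deSitter static slice with `m > 0` and `9Λm² < 1`: then
`f(3m) > 0`, and the maximum of `k` over the region where `f > 0` is attained
exactly at `r = 3m` (the unstable circular photon orbit): for every `r > 0`
with `f r > 0` and `r ≠ 3m`, one has `k r < k (3m)`. -/
theorem photon_sphere_maximizes_k (m Λ : ℝ) (hm : 0 < m) (hΛ : 0 < Λ)
    (hsub : 9 * Λ * m^2 < 1)
    (f k : ℝ → ℝ)
    (hf : ∀ r, f r = 1 - 2*m/r - Λ/3 * r^2)
    (hk : ∀ r, k r = (2/r) * Real.sqrt (f r)) :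
    0 < f (3*m) ∧
    ∀ r : ℝ, 0 < r → 0 < f r → r ≠ 3*m → k r < k (3*m) := by
  have h3m : (0:ℝ) < 3*m := by linarith
  have hm' : m ≠ 0 := ne_of_gt hm
  have hf3 : 0 < f (3*m) := by
    rw [hf]
    have h1 : 2*m/(3*m) = 2/3 := by field_simp
    rw [h1]
    nlinarith
  refine ⟨hf3, ?_⟩
  intro r hr hfr hne
  have hr' : r ≠ 0 := ne_of_gt hr
  have hk3pos : 0 < k (3*m) := by
    rw [hk]
    exact mul_pos (by positivity) (Real.sqrt_pos.mpr hf3)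
  have hkrnn : 0 ≤ k r := by rw [hk]; positivity
  have hsq : (k r)^2 < (k (3*m))^2 := by
    rw [hk r, hk (3*m), mul_pow, mul_pow, Real.sq_sqrt hfr.le, Real.sq_sqrt hf3.le,
      hf r, hf (3*m)]
    have e1 : (2/r)^2 * (1 - 2*m/r - Λ/3 * r^2) = 4/r^2 - 8*m/r^3 - 4*Λ/3 := by
      field_simp; ring
    have e2 : (2/(3*m))^2 * (1 - 2*m/(3*m) - Λ/3 * (3*m)^2)
        = 4/(27*m^2) - 4*Λ/3 := by
      field_simp; ring
    rw [e1, e2]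
    have hsubne : r - 3*m ≠ 0 := sub_ne_zero.mpr hne
    have h1 : 0 < (r-3*m)^2 :=
      lt_of_le_of_ne (sq_nonneg _) (Ne.symm (pow_ne_zero 2 hsubne))
    have hpos : 0 < 4*(r-3*m)^2*(r+6*m)/(27*m^2*r^3) := by
      apply div_pos
      · have : 0 < r + 6*m := by linarith
        positivity
      · positivity
    have heq : 4*(r-3*m)^2*(r+6*m)/(27*m^2*r^3)
        = 4/(27*m^2) - (4/r^2 - 8*m/r^3) := by
      field_simp; ring
    rw [heq] at hpos
    linarith
  exact lt_of_pow_lt_pow_left₀ 2 hk3pos.le hsq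
end

section
/- For every $x>0$, the identity $Dk(x) + \frac{1}{2}k(x)^2 = \dfrac{2m}{x^3}\,\psi(x)^{-6}$ holds; consequently, since $m > 0$, one has $Dk(x) + \frac{1}{2}k(x)^2 > 0$ for all $x>0$. -/
/-!
In terms of `u = x + m/2` one has `ψ = u/x` and `k = 2x(x - m/2)/u³`, so
`k' = (-2x² + 4mx - m²/2)/u⁴`. Then `ψ⁻² k' = x²(-2x² + 4mx - m²/2)/u⁶` and
`k²/2 = x²(2x² - 2mx + m²/2)/u⁶`: all terms but `2mx³/u⁶ = (2m/x³) ψ⁻⁶` cancel.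
-/

namespace SchwarzschildCMC

variable (m : ℝ)

noncomputable def confFactor (x : ℝ) : ℝ := 1 + m / (2 * x)

noncomputable def meanCurv (x : ℝ) : ℝ := (2 / x) * (1 - m / (2 * x)) / confFactor m x ^ 3

variable {m}

theorem confFactor_eq {x : ℝ} (hx : x ≠ 0) : confFactor m x = (x + m / 2) / x := by
  unfold confFactor
  field_simp

theorem meanCurv_eq {x : ℝ} (hx : x ≠ 0) :
    meanCurv m x = 2 * x * (x - m / 2) / (x + m / 2) ^ 3 := by
  rw [meanCurv, confFactor_eq hx, div_pow, div_div_eq_mul_div]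
  field_simp

theorem hasDerivAt_meanCurv {x : ℝ} (hx : x ≠ 0) (hu : x + m / 2 ≠ 0) :
    HasDerivAt (meanCurv m) ((-2 * x ^ 2 + 4 * m * x - m ^ 2 / 2) / (x + m / 2) ^ 4) x := by
  have closed_form : HasDerivAt (fun y => 2 * y * (y - m / 2) / (y + m / 2) ^ 3)
      ((-2 * x ^ 2 + 4 * m * x - m ^ 2 / 2) / (x + m / 2) ^ 4) x := by
    refine ((((hasDerivAt_id' x).const_mul 2).fun_mul ((hasDerivAt_id' x).sub_const (m / 2))).fun_div
      (((hasDerivAt_id' x).add_const (m / 2)).fun_pow 3) (pow_ne_zero 3 hu)).congr_deriv ?_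
    simp only [Nat.cast_ofNat, Nat.add_one_sub_one]
    field_simp
    ring
  refine closed_form.congr_of_eventuallyEq ?_
  filter_upwards [isOpen_ne.mem_nhds hx] with y hy using meanCurv_eq hy

theorem normalDeriv_add_half_sq_meanCurv {x : ℝ} (hx : x ≠ 0) (hu : x + m / 2 ≠ 0) :
    (confFactor m x)⁻¹ ^ 2 * deriv (meanCurv m) x + 1 / 2 * meanCurv m x ^ 2
      = 2 * m / x ^ 3 * (confFactor m x ^ 6)⁻¹ := by
  rw [(hasDerivAt_meanCurv hx hu).deriv, meanCurv_eq hx, confFactor_eq hx]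
  field_simp
  ring

end SchwarzschildCMC

open SchwarzschildCMC in
/-- Constant-mean-curvature slice of Schwarzschild–deSitter: for every `x > 0`,
`Dk x + (1/2) k(x)² = (2m/x³) ψ(x)⁻⁶`; consequently, since `m > 0`,
`Dk x + (1/2) k(x)² > 0` for all `x > 0`. -/
theorem cmc_slice_quasilocal_identity (m : ℝ) (hm : 0 < m)
    (ψ k Dk : ℝ → ℝ)
    (hψ : ∀ x, ψ x = 1 + m/(2*x))
    (hk : ∀ x, k x = (2/x) * (1 - m/(2*x)) / (ψ x)^3)
    (hDk : ∀ x, Dk x = (ψ x)⁻¹^2 * deriv k x) :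
    ∀ x : ℝ, 0 < x →
      Dk x + (1/2) * (k x)^2 = (2*m/x^3) * ((ψ x)^6)⁻¹ ∧
      0 < Dk x + (1/2) * (k x)^2 := by
  obtain rfl : ψ = confFactor m := funext hψ
  obtain rfl : k = meanCurv m := funext hk
  intro x hx
  have identity := normalDeriv_add_half_sq_meanCurv (m := m) hx.ne' (by positivity)
  rw [hDk, identity]
  have : 0 < confFactor m x := by unfold confFactor; positivity
  exact ⟨rfl, by positivity⟩
end

section
/- For every $x > m/2$ one has $k(x) > 0$ and the ratio identity $\dfrac{Dk(x)}{k(x)^2} = -\dfrac{1}{2} + \dfrac{x/m}{2\left(\frac{x}{m} - \frac{1}{2}\right)^2}$ holds. -/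
/-!
Away from the horizon `x = m/2` the mean curvature is the rational function
`k(x) = 2x(x - m/2)/(x + m/2)³`, with `k'(x) = (-2x² + 4mx - m²/2)/(x + m/2)⁴` and
`ψ(x)⁻¹ = x/(x + m/2)`. The factors `x²/(x + m/2)⁶` of `ψ⁻² k'` and of `k²` cancel, leaving
`(-2x² + 4mx - m²/2)/(4(x - m/2)²)`, which is the right-hand side over a common denominator.
-/

open Filter Topology

noncomputable def cmcCurvature (m x : ℝ) : ℝ := 2 * x * (x - m / 2) / (x + m / 2) ^ 3

lemma cmcCurvature_pos {m x : ℝ} (hm : 0 ≤ m) (hx : m / 2 < x) : 0 < cmcCurvature m x := by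
  have hx₀ : 0 < x := by linarith
  have hxm : 0 < x - m / 2 := by linarith
  unfold cmcCurvature
  positivity

lemma two_div_mul_one_sub_div_pow_three_eq_cmcCurvature {m y : ℝ} (hm : 0 ≤ m) (hy : 0 < y) :
    (2 / y) * (1 - m / (2 * y)) / (1 + m / (2 * y)) ^ 3 = cmcCurvature m y := by
  have : 0 < y + m / 2 := by linarith
  unfold cmcCurvature
  field_simp

lemma hasDerivAt_cmcCurvature {m x : ℝ} (hx : x + m / 2 ≠ 0) :
    HasDerivAt (cmcCurvature m) ((-2 * x ^ 2 + 4 * m * x - m ^ 2 / 2) / (x + m / 2) ^ 4) x := by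
  have hnum : HasDerivAt (fun y => 2 * y * (y - m / 2)) (4 * x - m) x :=
    (((hasDerivAt_id' x).const_mul 2).mul ((hasDerivAt_id' x).sub_const (m / 2))).congr_deriv
      (by ring)
  have hden : HasDerivAt (fun y => (y + m / 2) ^ 3) (3 * (x + m / 2) ^ 2) x :=
    (((hasDerivAt_id' x).add_const (m / 2)).fun_pow 3).congr_deriv (by norm_num)
  refine (hnum.div hden (pow_ne_zero 3 hx)).congr_deriv ?_
  field_simp
  ring

lemma cmcCurvature_ratio {m x : ℝ} (hm : m ≠ 0) (hx₀ : x ≠ 0) (hxm : x - m / 2 ≠ 0)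
    (hxp : x + m / 2 ≠ 0) :
    (x / (x + m / 2)) ^ 2 * ((-2 * x ^ 2 + 4 * m * x - m ^ 2 / 2) / (x + m / 2) ^ 4)
        / cmcCurvature m x ^ 2 = -(1 / 2) + (x / m) / (2 * (x / m - 1 / 2) ^ 2) := by
  -- `field_simp` rewrites `x ∓ m / 2` as `(x * 2 ∓ m) / 2` and needs these forms to cancel.
  have hxm' : x * 2 - m ≠ 0 := fun h => hxm (by linarith)
  have hxp' : x * 2 + m ≠ 0 := fun h => hxp (by linarith)
  unfold cmcCurvature
  field_simp
  ring

/-- Constant-mean-curvature slice of Schwarzschild–deSitter: for every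
`x > m/2` one has `k x > 0` and
`Dk x / k(x)² = -1/2 + (x/m) / (2 (x/m - 1/2)²)`. -/
theorem cmc_slice_ratio_identity (m : ℝ) (hm : 0 < m)
    (ψ k Dk : ℝ → ℝ)
    (hψ : ∀ x, ψ x = 1 + m/(2*x))
    (hk : ∀ x, k x = (2/x) * (1 - m/(2*x)) / (ψ x)^3)
    (hDk : ∀ x, Dk x = (ψ x)⁻¹^2 * deriv k x) :
    ∀ x : ℝ, m/2 < x →
      0 < k x ∧
      Dk x / (k x)^2 = -(1/2) + (x/m) / (2 * (x/m - 1/2)^2) := by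
  intro x hx
  have hx₀ : 0 < x := by linarith
  have hk_eq : k =ᶠ[𝓝 x] cmcCurvature m := by
    filter_upwards [Ioi_mem_nhds hx₀] with y hy
    rw [hk, hψ, two_div_mul_one_sub_div_pow_three_eq_cmcCurvature hm.le hy]
  have hψ_inv : (ψ x)⁻¹ = x / (x + m / 2) := by
    rw [hψ]
    field_simp
  refine ⟨hk_eq.eq_of_nhds ▸ cmcCurvature_pos hm.le hx, ?_⟩
  rw [hDk, hψ_inv, hk_eq.deriv_eq, (hasDerivAt_cmcCurvature (by linarith)).deriv,
    hk_eq.eq_of_nhds]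
  exact cmcCurvature_ratio hm.ne' hx₀.ne' (by linarith) (by linarith)
end

section
/- Let $\Lambda > 0$ and $H = \sqrt{\Lambda/3}$. If $x > 0$ satisfies the cosmological-horizon condition $k(x) = 2H$, then $Dk(x) + \frac{2}{3}\Lambda = \dfrac{2m}{x^3}\,\psi(x)^{-6} > 0$; in particular $Dk(x) \geq -\frac{2}{3}\Lambda$. -/
/-!
Since `k = 8x(2x - m)/(2x + m)³` and `ψ = (2x + m)/(2x)`, a direct computation gives
`Dk + k²/2 = (2m/x³) ψ⁻⁶` at every `x > 0`. On the cosmological horizon `k = 2H`, so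
`k²/2 = 2H² = (2/3)Λ`.
-/

noncomputable section

def schwarzschildPsi (m x : ℝ) : ℝ := 1 + m / (2 * x)

def cmcMeanCurvature (m x : ℝ) : ℝ := 2 / x * (1 - m / (2 * x)) / schwarzschildPsi m x ^ 3

variable {m x : ℝ}

lemma cmcMeanCurvature_eq_div (hx : x ≠ 0) (hxm : 2 * x + m ≠ 0) :
    cmcMeanCurvature m x = 8 * x * (2 * x - m) / (2 * x + m) ^ 3 := by
  unfold cmcMeanCurvature schwarzschildPsi
  field_simp
  ring

lemma hasDerivAt_cmcMeanCurvature (hx : x ≠ 0) (hxm : 2 * x + m ≠ 0) :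
    HasDerivAt (cmcMeanCurvature m)
      (-8 * (4 * x ^ 2 - 8 * m * x + m ^ 2) / (2 * x + m) ^ 4) x := by
  have hrat : HasDerivAt (fun y => 8 * y * (2 * y - m) / (2 * y + m) ^ 3)
      (-8 * (4 * x ^ 2 - 8 * m * x + m ^ 2) / (2 * x + m) ^ 4) x := by
    have hnum : HasDerivAt (fun y => 8 * y * (2 * y - m)) (8 * (2 * x - m) + 8 * x * 2) x := by
      simpa using
        ((hasDerivAt_id x).const_mul 8).fun_mul (((hasDerivAt_id x).const_mul 2).sub_const m)
    have hden : HasDerivAt (fun y => (2 * y + m) ^ 3) (3 * (2 * x + m) ^ 2 * 2) x := by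
      simpa using (((hasDerivAt_id x).const_mul 2).add_const m).fun_pow 3
    refine (hnum.fun_div hden (pow_ne_zero 3 hxm)).congr_deriv ?_
    field_simp
    ring
  have hnear : ∀ᶠ y in nhds x, y ≠ 0 ∧ 2 * y + m ≠ 0 :=
    (eventually_ne_nhds hx).and
      ((by fun_prop : Continuous fun y : ℝ => 2 * y + m).continuousAt.eventually_ne hxm)
  refine hrat.congr_of_eventuallyEq ?_
  filter_upwards [hnear] with y ⟨hy, hym⟩
  exact cmcMeanCurvature_eq_div hy hym

lemma normalDeriv_cmcMeanCurvature_add_half_sq (hx : x ≠ 0) (hxm : 2 * x + m ≠ 0) :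
    (schwarzschildPsi m x)⁻¹ ^ 2 * deriv (cmcMeanCurvature m) x + cmcMeanCurvature m x ^ 2 / 2 =
      2 * m / x ^ 3 * (schwarzschildPsi m x ^ 6)⁻¹ := by
  rw [(hasDerivAt_cmcMeanCurvature hx hxm).deriv, cmcMeanCurvature_eq_div hx hxm, schwarzschildPsi]
  field_simp
  ring

end

/-- Constant-mean-curvature slice of Schwarzschild–deSitter: let `Λ > 0` and
`H = √(Λ/3)`. If `x > 0` satisfies the cosmological-horizon condition
`k x = 2H`, then `Dk x + (2/3)Λ = (2m/x³) ψ(x)⁻⁶ > 0`; in particular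
`Dk x ≥ -(2/3)Λ`. -/
theorem cmc_cosmological_horizon_bound (m Λ : ℝ) (hm : 0 < m) (hΛ : 0 < Λ)
    (H : ℝ) (hH : H = Real.sqrt (Λ/3))
    (ψ k Dk : ℝ → ℝ)
    (hψ : ∀ x, ψ x = 1 + m/(2*x))
    (hk : ∀ x, k x = (2/x) * (1 - m/(2*x)) / (ψ x)^3)
    (hDk : ∀ x, Dk x = (ψ x)⁻¹^2 * deriv k x) :
    ∀ x : ℝ, 0 < x → k x = 2*H →
      Dk x + (2/3)*Λ = (2*m/x^3) * ((ψ x)^6)⁻¹ ∧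
      0 < (2*m/x^3) * ((ψ x)^6)⁻¹ ∧
      Dk x ≥ -((2/3)*Λ) := by
  obtain rfl : ψ = schwarzschildPsi m := funext hψ
  obtain rfl : k = cmcMeanCurvature m := funext hk
  intro x hx hhor
  have hΛ_eq : (2 / 3) * Λ = cmcMeanCurvature m x ^ 2 / 2 := by
    rw [hhor, hH, mul_pow, Real.sq_sqrt (by positivity)]
    ring
  have hidentity : Dk x + (2 / 3) * Λ = 2 * m / x ^ 3 * (schwarzschildPsi m x ^ 6)⁻¹ := by
    rw [hDk, hΛ_eq]
    exact normalDeriv_cmcMeanCurvature_add_half_sq hx.ne' (by positivity)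
  have hpos : 0 < 2 * m / x ^ 3 * (schwarzschildPsi m x ^ 6)⁻¹ := by
    unfold schwarzschildPsi
    positivity
  exact ⟨hidentity, hpos, by linarith⟩
end
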